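/- arXiv:1601.05608 — 4 statements merged into one kernel-verified Lean document; each statement's English description precedes it below -/
import Mathlib

section
/- If G ⊆ X₁ × ⋯ × X_d admits a c-splitting tuple (φ₁,…,φ_d) and c is continuous, then G admits a c-splitting tuple consisting of upper semicontinuous (in particular Borel measurable) functions, obtained by successively replacing each φᵢ with the infimal conjugate-type function φ̃_{i+1}(x⁰_{i+1}) = inf over the other coordinates of c(x₁,…,x⁰_{i+1},…,x_d) − φ̃₁(x₁) − ⋯ − φ̃ᵢ(xᵢ) − φ_{i+2}(x_{i+2}) − ⋯ − φ_d(x_d). -/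
open scoped BigOperators

noncomputable section

/-- `(φ₁, …, φ_d)` is a `(G, c)`-splitting tuple: functions `Xᵢ → [-∞, ∞)` whose sum is
everywhere at most `c`, with equality on `G`. -/
def IsSplittingTuple {d : ℕ} {X : Fin d → Type*} (c : (∀ i, X i) → ℝ)
    (G : Set (∀ i, X i)) (φ : ∀ i, X i → EReal) : Prop :=
  (∀ i x, φ i x < ⊤) ∧
  (∀ x : ∀ i, X i, ∑ i, φ i (x i) ≤ (c x : EReal)) ∧
  (∀ x ∈ G, ∑ i, φ i (x i) = (c x : EReal))

/-!
Replace one coordinate `φ i` by its `c`-transform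
`y ↦ ⨅ x, c (x with xᵢ = y) - ∑_{j ≠ i} φ j (x j)`. The transform dominates `φ i`, so equality
on `G` survives, and it is by construction small enough to keep the inequality everywhere; it
stays below `⊤` as soon as `G` is nonempty. Being an infimum of functions continuous in `y`, it
is upper semicontinuous, and transforming later coordinates leaves it untouched, so transforming
every coordinate in turn yields an upper semicontinuous splitting tuple. For empty `G` the
constant `⊥` tuple does.
-/

open Finset Function

lemma EReal.continuous_coe_sub {α : Type*} [TopologicalSpace α] {f : α → ℝ} (hf : Continuous f)
    (s : EReal) : Continuous fun a => (f a : EReal) - s :=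
  continuous_iff_continuousAt.2 fun a =>
    (EReal.continuousAt_add (p := ((f a : EReal), -s)) (Or.inl (EReal.coe_ne_top _))
      (Or.inl (EReal.coe_ne_bot _))).comp (f := fun a => ((f a : EReal), -s))
      ((continuous_coe_real_ereal.comp hf).prodMk continuous_const).continuousAt

lemma EReal.le_coe_sub_iff_add_le {a b : EReal} {c : ℝ} : a ≤ c - b ↔ a + b ≤ c :=
  EReal.le_sub_iff_add_le (Or.inr (EReal.coe_ne_bot c)) (Or.inr (EReal.coe_ne_top c))

section

variable {d : ℕ} {X : Fin d → Type*}

lemma sum_apply_update_eq_add_sum_compl (φ : ∀ i, X i → EReal) (x : ∀ i, X i) (i : Fin d)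
    (y : X i) : ∑ j, φ j (update x i y j) = φ i y + ∑ j ∈ {i}ᶜ, φ j (x j) := by
  simp_rw [apply_update]
  rw [Fintype.sum_eq_add_sum_compl i, update_self]
  congr 1
  exact sum_congr rfl fun j hj => update_of_ne (by simpa using hj) _ _

lemma sum_update_apply_eq_add_sum_compl (φ : ∀ i, X i → EReal) (i : Fin d) (f : X i → EReal)
    (x : ∀ i, X i) : ∑ j, update φ i f j (x j) = f (x i) + ∑ j ∈ {i}ᶜ, φ j (x j) := by
  rw [Fintype.sum_eq_add_sum_compl i, update_self]
  congr 1
  exact sum_congr rfl fun j hj => by rw [update_of_ne (by simpa using hj)]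

/-- The largest function that can replace `φ i` without breaking `∑ j, φ j (x j) ≤ c x`. -/
def cTransform (c : (∀ i, X i) → ℝ) (φ : ∀ i, X i → EReal) (i : Fin d) (y : X i) : EReal :=
  ⨅ x : ∀ j, X j, (c (update x i y) : EReal) - ∑ j ∈ {i}ᶜ, φ j (x j)

variable {c : (∀ i, X i) → ℝ} {G : Set (∀ i, X i)} {φ : ∀ i, X i → EReal}

lemma le_cTransform_iff {i : Fin d} {y : X i} {t : EReal} :
    t ≤ cTransform c φ i y ↔ ∀ x : ∀ j, X j, t + ∑ j ∈ {i}ᶜ, φ j (x j) ≤ c (update x i y) := by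
  simp only [cTransform, le_iInf_iff, EReal.le_coe_sub_iff_add_le]

lemma cTransform_add_sum_compl_le (i : Fin d) (x : ∀ j, X j) :
    cTransform c φ i (x i) + ∑ j ∈ {i}ᶜ, φ j (x j) ≤ c x := by
  simpa using le_cTransform_iff.1 (le_refl (cTransform c φ i (x i))) x

lemma cTransform_le_coe_sub (i : Fin d) (x : ∀ j, X j) (y : X i) :
    cTransform c φ i y ≤ (c (update x i y) : EReal) - ∑ j ∈ {i}ᶜ, φ j (x j) :=
  iInf_le _ x

lemma upperSemicontinuous_cTransform [∀ i, TopologicalSpace (X i)] (hc : Continuous c)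
    (i : Fin d) : UpperSemicontinuous (cTransform c φ i) :=
  upperSemicontinuous_iInf fun _ =>
    (EReal.continuous_coe_sub (hc.comp (continuous_const.update i continuous_id)) _)
      |>.upperSemicontinuous

namespace IsSplittingTuple

lemma le_cTransform (hφ : IsSplittingTuple c G φ) (i : Fin d) (y : X i) :
    φ i y ≤ cTransform c φ i y :=
  le_cTransform_iff.2 fun x => by
    simpa [sum_apply_update_eq_add_sum_compl] using hφ.2.1 (update x i y)

/-- On `G` the remaining coordinates sum to a finite value, which keeps the `c`-transform
below `⊤`. -/
lemma cTransform_lt_top (hφ : IsSplittingTuple c G φ) (hG : G.Nonempty) (i : Fin d) (y : X i) :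
    cTransform c φ i y < ⊤ := by
  obtain ⟨g, hg⟩ := hG
  have hsum_ne_bot : ∑ j ∈ {i}ᶜ, φ j (g j) ≠ ⊥ := fun h => by
    have := hφ.2.2 g hg
    rw [Fintype.sum_eq_add_sum_compl i, h, EReal.add_bot] at this
    exact EReal.coe_ne_bot _ this.symm
  exact (cTransform_le_coe_sub i g y).trans_lt
    (EReal.add_lt_top (EReal.coe_ne_top _) (by simpa using hsum_ne_bot))

lemma update_cTransform (hφ : IsSplittingTuple c G φ) (hG : G.Nonempty) (i : Fin d) :
    IsSplittingTuple c G (update φ i (cTransform c φ i)) := by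
  have hsum_le (x : ∀ j, X j) : ∑ j, update φ i (cTransform c φ i) j (x j) ≤ c x := by
    rw [sum_update_apply_eq_add_sum_compl]
    exact cTransform_add_sum_compl_le i x
  refine ⟨fun j y => ?_, hsum_le, fun x hx => (hsum_le x).antisymm ?_⟩
  · rcases eq_or_ne j i with rfl | hj
    · simpa using hφ.cTransform_lt_top hG j y
    · simpa [hj] using hφ.1 j y
  · rw [← hφ.2.2 x hx]
    have hle : φ ≤ update φ i (cTransform c φ i) := le_update_self_iff.2 (hφ.le_cTransform i)
    exact sum_le_sum fun j _ => hle j (x j)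

end IsSplittingTuple

lemma exists_isSplittingTuple_upperSemicontinuous_on [∀ i, TopologicalSpace (X i)]
    (hc : Continuous c) (hG : G.Nonempty) (hφ : IsSplittingTuple c G φ) (S : Finset (Fin d)) :
    ∃ ψ, IsSplittingTuple c G ψ ∧ ∀ i ∈ S, UpperSemicontinuous (ψ i) := by
  induction S using Finset.induction_on with
  | empty => exact ⟨φ, hφ, by simp⟩
  | insert i S _ ih =>
    obtain ⟨ψ, hψ, husc⟩ := ih
    refine ⟨update ψ i (cTransform c ψ i), hψ.update_cTransform hG i, fun j hj => ?_⟩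
    rcases eq_or_ne j i with rfl | hji
    · simpa using upperSemicontinuous_cTransform hc j
    · simpa [hji] using husc j ((mem_insert.1 hj).resolve_left hji)

lemma isSplittingTuple_empty_bot [NeZero d] (c : (∀ i, X i) → ℝ) :
    IsSplittingTuple c ∅ fun _ _ => ⊥ :=
  ⟨fun _ _ => bot_lt_top, fun _ => by
    rw [Fintype.sum_eq_add_sum_compl 0, EReal.bot_add]
    exact bot_le, by simp⟩

end

theorem exists_usc_splittingTuple_general {d : ℕ} {X : Fin d → Type*}
    [∀ i, TopologicalSpace (X i)]
    [∀ i, MeasurableSpace (X i)] [∀ i, BorelSpace (X i)]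
    (c : (∀ i, X i) → ℝ) (hc : Continuous c)
    (G : Set (∀ i, X i)) (φ : ∀ i, X i → EReal)
    (hφ : IsSplittingTuple c G φ) :
    ∃ ψ : ∀ i, X i → EReal, IsSplittingTuple c G ψ ∧
      ∀ i, UpperSemicontinuous (ψ i) ∧ Measurable (ψ i) := by
  suffices ∃ ψ : ∀ i, X i → EReal, IsSplittingTuple c G ψ ∧ ∀ i, UpperSemicontinuous (ψ i) by
    obtain ⟨ψ, hψ, husc⟩ := this
    exact ⟨ψ, hψ, fun i => ⟨husc i, (husc i).measurable⟩⟩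
  rcases G.eq_empty_or_nonempty with rfl | hG
  · rcases d.eq_zero_or_pos with rfl | hd
    · exact ⟨φ, hφ, fun i => i.elim0⟩
    · have : NeZero d := ⟨hd.ne'⟩
      exact ⟨_, isSplittingTuple_empty_bot c, fun _ => upperSemicontinuous_const⟩
  · obtain ⟨ψ, hψ, husc⟩ := exists_isSplittingTuple_upperSemicontinuous_on hc hG hφ univ
    exact ⟨ψ, hψ, fun i => husc i (mem_univ i)⟩

/-- If `G` is a `c`-splitting set and `c` is continuous, then there is a `(G, c)`-splitting
tuple consisting of upper semicontinuous (in particular Borel measurable) functions. -/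
theorem exists_usc_splittingTuple {d : ℕ} {X : Fin d → Type*}
    [∀ i, TopologicalSpace (X i)] [∀ i, PolishSpace (X i)]
    [∀ i, MeasurableSpace (X i)] [∀ i, BorelSpace (X i)]
    (c : (∀ i, X i) → ℝ) (hc : Continuous c)
    (G : Set (∀ i, X i)) (φ : ∀ i, X i → EReal)
    (hφ : IsSplittingTuple c G φ) :
    ∃ ψ : ∀ i, X i → EReal, IsSplittingTuple c G ψ ∧
      ∀ i, UpperSemicontinuous (ψ i) ∧ Measurable (ψ i) :=
  exists_usc_splittingTuple_general c hc G φ hφ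
end
end

section
/- Let c : X₁ × ⋯ × X_d → [0,∞) be continuous, G a c-splitting set, and x⁰ = (x₁⁰,…,x_d⁰) ∈ G. Then there exists a measurable (G,c)-splitting tuple (φ₁,…,φ_d) satisfying the pointwise bounds φᵢ(xᵢ) ≤ c(x₁⁰,…,x_{i−1}⁰, xᵢ, x_{i+1}⁰,…,x_d⁰) for all xᵢ ∈ Xᵢ and each i = 1,…,d. -/
/-!
Any splitting tuple can be shifted by constants summing to zero so that every coordinate is
nonnegative at `x⁰`; testing the splitting inequality at `x⁰` with one coordinate freed then bounds
`φᵢ` by `c(x⁰₁, …, xᵢ, …, x⁰_d)`. Replacing each `φᵢ` by its upper semicontinuous envelope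
`xᵢ ↦ limsup_{y → xᵢ} φᵢ(y)` keeps these bounds (the right-hand side is continuous), only increases
the functions, and keeps the splitting inequality: free one coordinate at a time and pass to the
limsup, using that `c` is continuous. Upper semicontinuous functions are Borel measurable.
-/

open scoped BigOperators

noncomputable section

open Filter Topology Finset Function

@[norm_cast]
theorem EReal.coe_finset_sum {ι : Type*} (s : Finset ι) (f : ι → ℝ) :
    ((∑ i ∈ s, f i : ℝ) : EReal) = ∑ i ∈ s, (f i : EReal) :=
  map_sum (⟨⟨Real.toEReal, EReal.coe_zero⟩, EReal.coe_add⟩ : ℝ →+ EReal) f s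

section UpperEnvelope

variable {α γ : Type*} [TopologicalSpace α] [CompleteLinearOrder γ]

def upperEnvelope (f : α → γ) (x : α) : γ :=
  limsup f (𝓝 x)

theorem le_upperEnvelope (f : α → γ) (x : α) : f x ≤ upperEnvelope f x :=
  le_limsup_of_frequently_le' (frequently_iff.2 fun hU => ⟨x, mem_of_mem_nhds hU, le_rfl⟩)

theorem upperSemicontinuous_upperEnvelope [DenselyOrdered γ] (f : α → γ) :
    UpperSemicontinuous (upperEnvelope f) := by
  intro x r hr
  obtain ⟨m, hxm, hmr⟩ := exists_between hr
  filter_upwards [(eventually_lt_of_limsup_lt hxm).eventually_nhds] with y hy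
  exact (limsup_le_of_le (by isBoundedDefault) (hy.mono fun _ => le_of_lt)).trans_lt hmr

theorem upperEnvelope_le_of_le [TopologicalSpace γ] [OrderTopology γ] {f g : α → γ}
    (hfg : f ≤ g) {x : α} (hg : ContinuousAt g x) : upperEnvelope f x ≤ g x :=
  (limsup_le_limsup (Eventually.of_forall hfg)).trans hg.tendsto.limsup_eq.le

end UpperEnvelope

section Splitting

variable {ι : Type*} [DecidableEq ι] {X : ι → Type*}

theorem sum_apply_update_eq_add_sum_erase [Fintype ι] {M : Type*} [AddCommMonoid M]
    (φ : ∀ i, X i → M) (x : ∀ i, X i) (j : ι) (y : X j) :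
    ∑ i, φ i (update x j y i) = φ j y + ∑ i ∈ univ.erase j, φ i (x i) := by
  rw [← add_sum_erase _ _ (mem_univ j), update_self]
  exact congrArg _ (sum_congr rfl fun _ hi => by rw [update_of_ne (ne_of_mem_erase hi)])

variable [∀ i, TopologicalSpace (X i)] {c : (∀ i, X i) → ℝ}

theorem continuous_coe_ereal_comp_update (hc : Continuous c) (x : ∀ i, X i) (j : ι) :
    Continuous fun y : X j => (c (update x j y) : EReal) :=
  continuous_coe_real_ereal.comp (hc.comp (continuous_const.update j continuous_id))

variable [Fintype ι]

theorem sum_update_upperEnvelope_le (hc : Continuous c) {φ : ∀ i, X i → EReal}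
    (hφ : ∀ x, ∑ i, φ i (x i) ≤ c x) (j : ι) (x : ∀ i, X i) :
    ∑ i, update φ j (upperEnvelope (φ j)) i (x i) ≤ c x := by
  set R := ∑ i ∈ univ.erase j, φ i (x i)
  have hslice : (fun y => φ j y + R) ≤ fun y => (c (update x j y) : EReal) := fun y => by
    simpa only [sum_apply_update_eq_add_sum_erase] using hφ (update x j y)
  calc ∑ i, update φ j (upperEnvelope (φ j)) i (x i)
      = upperEnvelope (φ j) (x j) + R := by
        rw [← add_sum_erase _ _ (mem_univ j), update_self]
        exact congrArg _ (sum_congr rfl fun _ hi => by rw [update_of_ne (ne_of_mem_erase hi)])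
    _ ≤ upperEnvelope (fun y => φ j y + R) (x j) := by
        have := EReal.le_limsup_add (u := φ j) (v := fun _ => R) (f := 𝓝 (x j))
        rwa [liminf_const] at this
    _ ≤ c (update x j (x j)) :=
        upperEnvelope_le_of_le hslice (continuous_coe_ereal_comp_update hc x j).continuousAt
    _ = c x := by rw [update_eq_self]

theorem sum_upperEnvelope_le (hc : Continuous c) {φ : ∀ i, X i → EReal}
    (hφ : ∀ x, ∑ i, φ i (x i) ≤ c x) (x : ∀ i, X i) :
    ∑ i, upperEnvelope (φ i) (x i) ≤ c x := by
  suffices ∀ s : Finset ι, ∀ x, ∑ i, s.piecewise (fun i => upperEnvelope (φ i)) φ i (x i) ≤ c x by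
    simpa using this univ x
  intro s
  induction s using Finset.induction_on with
  | empty => simpa using hφ
  | insert j s hj ih =>
    have := sum_update_upperEnvelope_le hc ih j
    rwa [piecewise_eq_of_notMem _ _ _ hj, ← piecewise_insert] at this

end Splitting

namespace IsSplittingTuple

variable {d : ℕ} {X : Fin d → Type*} {c : (∀ i, X i) → ℝ} {G : Set (∀ i, X i)}
  {φ : ∀ i, X i → EReal}

theorem add_const (h : IsSplittingTuple c G φ) {b : Fin d → ℝ} (hb : ∑ i, b i = 0) :
    IsSplittingTuple c G fun i xi => φ i xi + b i := by
  have hsum : ∀ x : ∀ i, X i, ∑ i, (φ i (x i) + b i) = ∑ i, φ i (x i) := fun x => by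
    rw [sum_add_distrib, ← EReal.coe_finset_sum, hb, EReal.coe_zero, add_zero]
  exact ⟨fun i xi => EReal.add_lt_top (h.1 i xi).ne (EReal.coe_ne_top _),
    fun x => (hsum x).symm ▸ h.2.1 x, fun x hx => (hsum x).trans (h.2.2 x hx)⟩

theorem apply_ne_bot (h : IsSplittingTuple c G φ) {x : ∀ i, X i} (hx : x ∈ G) (i : Fin d) :
    φ i (x i) ≠ ⊥ := by
  intro hbot
  have hx := h.2.2 x hx
  rw [← add_sum_erase _ _ (mem_univ i), hbot, EReal.bot_add] at hx
  exact EReal.coe_ne_bot _ hx.symm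

theorem exists_nonneg_at (h : IsSplittingTuple c G φ) {x0 : ∀ i, X i} (hx0 : x0 ∈ G)
    (hc0 : 0 ≤ c x0) : ∃ χ, IsSplittingTuple c G χ ∧ ∀ i, 0 ≤ χ i (x0 i) := by
  set a : Fin d → ℝ := fun i => (φ i (x0 i)).toReal
  have ha : ∀ i, φ i (x0 i) = a i := fun i =>
    (EReal.coe_toReal (h.1 i _).ne (h.apply_ne_bot hx0 i)).symm
  have hsum : ∑ i, a i = c x0 := by
    have hG := h.2.2 x0 hx0
    simp_rw [ha] at hG
    exact_mod_cast hG
  refine ⟨_, h.add_const (b := fun i => c x0 / d - a i) ?_, fun i => ?_⟩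
  · rcases d with _ | d
    · simp
    · simp only [sum_sub_distrib, sum_const, card_univ, Fintype.card_fin, nsmul_eq_mul, hsum]
      field_simp
      ring
  · rw [ha, ← EReal.coe_add, add_sub_cancel]
    exact EReal.coe_nonneg.2 (by positivity)

theorem le_update (h : IsSplittingTuple c G φ) {x0 : ∀ i, X i} (hx0 : ∀ j, 0 ≤ φ j (x0 j))
    (i : Fin d) (xi : X i) : φ i xi ≤ c (update x0 i xi) :=
  calc φ i xi ≤ φ i xi + ∑ j ∈ univ.erase i, φ j (x0 j) :=
        le_add_of_nonneg_right (sum_nonneg fun j _ => hx0 j)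
    _ = ∑ j, φ j (update x0 i xi j) := (sum_apply_update_eq_add_sum_erase φ x0 i xi).symm
    _ ≤ c (update x0 i xi) := h.2.1 _

theorem upperEnvelope [∀ i, TopologicalSpace (X i)] (h : IsSplittingTuple c G φ)
    (hc : Continuous c) (htop : ∀ i xi, upperEnvelope (φ i) xi < ⊤) :
    IsSplittingTuple c G fun i => upperEnvelope (φ i) :=
  ⟨htop, sum_upperEnvelope_le hc h.2.1, fun x hx => (sum_upperEnvelope_le hc h.2.1 x).antisymm <|
    (h.2.2 x hx).symm.le.trans (sum_le_sum fun i _ => le_upperEnvelope _ _)⟩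

end IsSplittingTuple

theorem exists_bounded_measurable_splittingTuple_general {d : ℕ} {X : Fin d → Type*}
    [∀ i, TopologicalSpace (X i)]
    [∀ i, MeasurableSpace (X i)] [∀ i, BorelSpace (X i)]
    (c : (∀ i, X i) → ℝ) (hc : Continuous c) (hc0 : ∀ x, 0 ≤ c x)
    (G : Set (∀ i, X i)) (hsplit : ∃ φ, IsSplittingTuple c G φ)
    (x0 : ∀ i, X i) (hx0 : x0 ∈ G) :
    ∃ φ : ∀ i, X i → EReal, IsSplittingTuple c G φ ∧
      (∀ i, Measurable (φ i)) ∧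
      ∀ i (xi : X i), φ i xi ≤ ((c (Function.update x0 i xi) : ℝ) : EReal) := by
  obtain ⟨ψ, hψ⟩ := hsplit
  obtain ⟨χ, hχ, hχ0⟩ := hψ.exists_nonneg_at hx0 (hc0 x0)
  have hbound : ∀ i xi, upperEnvelope (χ i) xi ≤ c (update x0 i xi) := fun i xi =>
    upperEnvelope_le_of_le (hχ.le_update hχ0 i)
      (continuous_coe_ereal_comp_update hc x0 i).continuousAt
  exact ⟨fun i => upperEnvelope (χ i),
    hχ.upperEnvelope hc fun i xi => (hbound i xi).trans_lt (EReal.coe_lt_top _),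
    fun i => (upperSemicontinuous_upperEnvelope _).measurable, hbound⟩

/-- Let `c ≥ 0` be continuous, `G` a `c`-splitting set and `x⁰ ∈ G`. Then there is a
measurable `(G, c)`-splitting tuple with `φᵢ(xᵢ) ≤ c(x₁⁰, …, xᵢ, …, x_d⁰)` for all `xᵢ`. -/
theorem exists_bounded_measurable_splittingTuple {d : ℕ} {X : Fin d → Type*}
    [∀ i, TopologicalSpace (X i)] [∀ i, PolishSpace (X i)]
    [∀ i, MeasurableSpace (X i)] [∀ i, BorelSpace (X i)]
    (c : (∀ i, X i) → ℝ) (hc : Continuous c) (hc0 : ∀ x, 0 ≤ c x)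
    (G : Set (∀ i, X i)) (hsplit : ∃ φ, IsSplittingTuple c G φ)
    (x0 : ∀ i, X i) (hx0 : x0 ∈ G) :
    ∃ φ : ∀ i, X i → EReal, IsSplittingTuple c G φ ∧
      (∀ i, Measurable (φ i)) ∧
      ∀ i (xi : X i), φ i xi ≤ ((c (Function.update x0 i xi) : ℝ) : EReal) :=
  exists_bounded_measurable_splittingTuple_general c hc hc0 G hsplit x0 hx0
end
end

section
/- Let c : X₁ × ⋯ × X_d → [0,∞) be continuous. Suppose that for every finite subset G of Γ, the set G ∪ {x⁰} admits a (c-splitting) tuple (φ₁,…,φ_d) bounded above by fixed functions c₁,…,c_d respectively. Then Γ itself admits a c-splitting tuple bounded above by c₁,…,c_d. (Compactness of pointwise convergence argument.) -/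
open scoped BigOperators
open Filter Topology

noncomputable section

private lemma EReal.tendsto_add' {α : Type*} {l : Filter α} {f g : α → EReal} {a b : EReal}
    (ha : a ≠ ⊤) (hb : b ≠ ⊤) (hf : Tendsto f l (𝓝 a)) (hg : Tendsto g l (𝓝 b)) :
    Tendsto (fun x => f x + g x) l (𝓝 (a + b)) :=
  (EReal.continuousAt_add (p := (a, b)) (Or.inl ha) (Or.inr hb)).tendsto.comp
    (hf.prodMk_nhds hg)

private lemma EReal.sum_ne_top' {ι : Type*} (s : Finset ι) (g : ι → EReal)
    (hg : ∀ j ∈ s, g j ≠ ⊤) : (∑ j ∈ s, g j) ≠ ⊤ := by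
  classical
  induction s using Finset.cons_induction with
  | empty => simp
  | cons k t hk ih =>
    rw [Finset.sum_cons]
    exact (EReal.add_lt_top (hg k (Finset.mem_cons_self k t))
      (ih fun j hj => hg j (Finset.mem_cons_of_mem hj))).ne

private lemma EReal.tendsto_finsetSum {α ι : Type*} {l : Filter α} (s : Finset ι)
    (f : ι → α → EReal) (g : ι → EReal) (hg : ∀ j ∈ s, g j ≠ ⊤)
    (hf : ∀ j ∈ s, Tendsto (f j) l (𝓝 (g j))) :
    Tendsto (fun a => ∑ j ∈ s, f j a) l (𝓝 (∑ j ∈ s, g j)) := by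
  classical
  induction s using Finset.cons_induction with
  | empty => simpa using tendsto_const_nhds
  | cons j s hj ih =>
    simp only [Finset.sum_cons]
    exact EReal.tendsto_add' (hg j (Finset.mem_cons_self j s))
      (EReal.sum_ne_top' s g fun k hk => hg k (Finset.mem_cons_of_mem hk))
      (hf j (Finset.mem_cons_self j s))
      (ih (fun k hk => hg k (Finset.mem_cons_of_mem hk))
        (fun k hk => hf k (Finset.mem_cons_of_mem hk)))

/-- Compactness step: if every finite subset `G ⊆ Γ`, augmented by `x⁰`, admits a
splitting tuple bounded above by the fixed functions `cᵢ`, then `Γ` itself admits a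
`c`-splitting tuple bounded above by `c₁, …, c_d`. -/
theorem splittingTuple_of_finite_subsets {d : ℕ} {X : Fin d → Type*}
    [∀ i, TopologicalSpace (X i)] [∀ i, PolishSpace (X i)]
    (c : (∀ i, X i) → ℝ) (hc : Continuous c) (hc0 : ∀ x, 0 ≤ c x)
    (Γ : Set (∀ i, X i)) (x0 : ∀ i, X i) (hx0 : x0 ∈ Γ)
    (cb : ∀ i, X i → ℝ) (hcb : ∀ i x, 0 ≤ cb i x)
    (hfin : ∀ G : Set (∀ i, X i), G ⊆ Γ → G.Finite →
      ∃ φ : ∀ i, X i → EReal, IsSplittingTuple c (G ∪ {x0}) φ ∧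
        ∀ i x, φ i x ≤ ((cb i x : ℝ) : EReal)) :
    ∃ φ : ∀ i, X i → EReal, IsSplittingTuple c Γ φ ∧
      ∀ i x, φ i x ≤ ((cb i x : ℝ) : EReal) := by
  classical
  set ι := {G : Set (∀ i, X i) // G ⊆ Γ ∧ G.Finite} with hι
  haveI : Nonempty ι := ⟨⟨∅, by simp, Set.finite_empty⟩⟩
  haveI : IsDirected ι (· ≤ ·) := ⟨fun G G' =>
    ⟨⟨G.1 ∪ G'.1, Set.union_subset G.2.1 G'.2.1, G.2.2.union G'.2.2⟩,
      Set.subset_union_left, Set.subset_union_right⟩⟩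
  -- choose a splitting tuple for each finite subset
  let u : ι → ∀ i, X i → EReal := fun G => (hfin G.1 G.2.1 G.2.2).choose
  have hu : ∀ G : ι, IsSplittingTuple c (G.1 ∪ {x0}) (u G) ∧
      ∀ i x, u G i x ≤ ((cb i x : ℝ) : EReal) := fun G => (hfin G.1 G.2.1 G.2.2).choose_spec
  -- ultrafilter refining atTop
  haveI : (atTop : Filter ι).NeBot := atTop_neBot
  let 𝒰 : Ultrafilter ι := Ultrafilter.of atTop
  have h𝒰 : (𝒰 : Filter ι) ≤ atTop := Ultrafilter.of_le _
  -- limit tuple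
  let φ : ∀ i, X i → EReal := fun i x => (𝒰.map (fun G => u G i x)).lim
  have hT : ∀ i x, Tendsto (fun G => u G i x) 𝒰 (𝓝 (φ i x)) := fun i x =>
    Ultrafilter.le_nhds_lim _
  have hle : ∀ i x, φ i x ≤ ((cb i x : ℝ) : EReal) := fun i x =>
    le_of_tendsto (hT i x) (Eventually.of_forall fun G => (hu G).2 i x)
  have hne : ∀ i x, φ i x ≠ ⊤ := fun i x => fun h =>
    ((h ▸ hle i x).trans_lt (EReal.coe_lt_top _)).false
  have hsum : ∀ x : ∀ i, X i,
      Tendsto (fun G => ∑ i, u G i (x i)) 𝒰 (𝓝 (∑ i, φ i (x i))) := fun x =>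
    EReal.tendsto_finsetSum _ _ _ (fun i _ => hne i (x i)) (fun i _ => hT i (x i))
  refine ⟨φ, ⟨fun i x => (hle i x).trans_lt (EReal.coe_lt_top _), fun x =>
    le_of_tendsto (hsum x) (Eventually.of_forall fun G => ((hu G).1).2.1 x), ?_⟩, hle⟩
  intro x hx
  have hev : ∀ᶠ G : ι in 𝒰, (∑ i, u G i (x i)) = (c x : EReal) := by
    have : ∀ᶠ G : ι in 𝒰, (⟨{x}, by simpa using hx, Set.finite_singleton x⟩ : ι) ≤ G :=
      h𝒰 (eventually_ge_atTop _)
    filter_upwards [this] with G hG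
    exact ((hu G).1).2.2 x (Or.inl (hG rfl))
  exact tendsto_nhds_unique (hsum x) (tendsto_const_nhds.congr' (hev.mono fun G h => h.symm))

end
end

section
/- Suppose μ ∈ ℳ(μ₁,…,μ_d) is concentrated on a set Γ admitting a measurable (Γ,c)-splitting tuple (φ₁,…,φ_d) with each φᵢ integrable against μᵢ. Then μ is optimal for the multi-marginal Monge–Kantorovich problem: ∫ c dμ = ∑ᵢ ∫ φᵢ dμᵢ ≤ ∫ c dμ' for every μ' ∈ ℳ(μ₁,…,μ_d). -/
open scoped BigOperators
open MeasureTheory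

noncomputable section

/-- If a coupling `μ` of `μ₁, …, μ_d` is concentrated on a set `Γ` admitting a measurable
`(Γ, c)`-splitting tuple with each `φᵢ` integrable, then
`∫ c dμ = ∑ᵢ ∫ φᵢ dμᵢ ≤ ∫ c dμ'` for every coupling `μ'`. -/
theorem optimal_of_splitting {d : ℕ} {X : Fin d → Type*}
    [∀ i, TopologicalSpace (X i)] [∀ i, PolishSpace (X i)]
    [∀ i, MeasurableSpace (X i)] [∀ i, BorelSpace (X i)]
    (μi : ∀ i, Measure (X i)) [∀ i, IsProbabilityMeasure (μi i)]
    (c : (∀ i, X i) → ℝ) (hcm : Measurable c) (hc0 : ∀ x, 0 ≤ c x)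
    (Γ : Set (∀ i, X i))
    (μ : Measure (∀ i, X i)) [IsProbabilityMeasure μ]
    (hmar : ∀ i, μ.map (fun x => x i) = μi i)
    (hconc : μ Γᶜ = 0)
    (φ : ∀ i, X i → ℝ) (hφm : ∀ i, Measurable (φ i))
    (hφint : ∀ i, Integrable (φ i) (μi i))
    (hle : ∀ x : ∀ i, X i, ∑ i, φ i (x i) ≤ c x)
    (heq : ∀ x ∈ Γ, ∑ i, φ i (x i) = c x) :
    (∫⁻ x, ENNReal.ofReal (c x) ∂μ
        = ENNReal.ofReal (∑ i, ∫ y, φ i y ∂(μi i))) ∧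
    ∀ μ' : Measure (∀ i, X i), IsProbabilityMeasure μ' →
      (∀ i, μ'.map (fun x => x i) = μi i) →
      ∫⁻ x, ENNReal.ofReal (c x) ∂μ ≤ ∫⁻ x, ENNReal.ofReal (c x) ∂μ' := by
  set g : (∀ i, X i) → ℝ := fun x => ∑ i, φ i (x i) with hg
  -- integrability of each φ i ∘ eval against any coupling
  have hint : ∀ (ν : Measure (∀ i, X i)), (∀ i, ν.map (fun x => x i) = μi i) →
      ∀ i, Integrable (fun x => φ i (x i)) ν := by
    intro ν hν i
    have h := hφint i
    rw [← hν i] at h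
    exact (integrable_map_measure (hφm i).aestronglyMeasurable
      (measurable_pi_apply i).aemeasurable).mp h
  have hgint : ∀ (ν : Measure (∀ i, X i)), (∀ i, ν.map (fun x => x i) = μi i) →
      Integrable g ν := by
    intro ν hν
    exact integrable_finset_sum _ (fun i _ => hint ν hν i)
  have hgval : ∀ (ν : Measure (∀ i, X i)), (∀ i, ν.map (fun x => x i) = μi i) →
      ∫ x, g x ∂ν = ∑ i, ∫ y, φ i y ∂(μi i) := by
    intro ν hν
    rw [hg]
    rw [integral_finset_sum _ (fun i _ => hint ν hν i)]
    congr 1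
    ext i
    rw [← hν i, integral_map (measurable_pi_apply i).aemeasurable
      (hφm i).aestronglyMeasurable]
  -- a.e. equality on μ
  have hae : (fun x => ENNReal.ofReal (c x)) =ᵐ[μ] fun x => ENNReal.ofReal (g x) := by
    filter_upwards [measure_eq_zero_iff_ae_notMem.mp hconc] with x hx
    simp only [hg]
    rw [heq x (by simpa using hx)]
  have hgnn : 0 ≤ᵐ[μ] g := by
    filter_upwards [measure_eq_zero_iff_ae_notMem.mp hconc] with x hx
    simp only [hg]
    rw [heq x (by simpa using hx)]
    exact hc0 x
  have h1 : ∫⁻ x, ENNReal.ofReal (c x) ∂μ = ENNReal.ofReal (∑ i, ∫ y, φ i y ∂(μi i)) := by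
    rw [lintegral_congr_ae hae,
      ← ofReal_integral_eq_lintegral_ofReal (hgint μ hmar) hgnn, hgval μ hmar]
  refine ⟨h1, fun μ' _ hmar' => ?_⟩
  rw [h1, ← hgval μ' hmar']
  have hofmax : ∀ a : ℝ, ENNReal.ofReal (max a 0) = ENNReal.ofReal a := by
    intro a
    rcases le_total a 0 with h | h
    · rw [max_eq_right h, ENNReal.ofReal_zero, ENNReal.ofReal_eq_zero.mpr h]
    · rw [max_eq_left h]
  calc ENNReal.ofReal (∫ x, g x ∂μ')
      ≤ ENNReal.ofReal (∫ x, max (g x) 0 ∂μ') :=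
        ENNReal.ofReal_le_ofReal (integral_mono (hgint μ' hmar')
          (hgint μ' hmar').pos_part (fun x => le_max_left _ _))
    _ = ∫⁻ x, ENNReal.ofReal (max (g x) 0) ∂μ' :=
        ofReal_integral_eq_lintegral_ofReal (hgint μ' hmar').pos_part
          (Filter.Eventually.of_forall fun x => le_max_right _ _)
    _ = ∫⁻ x, ENNReal.ofReal (g x) ∂μ' := by
        simp_rw [hofmax]
    _ ≤ ∫⁻ x, ENNReal.ofReal (c x) ∂μ' :=
        lintegral_mono fun x => ENNReal.ofReal_le_ofReal (hle x)
end
end
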